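/- Let 1/2 < λ₁ < λ₂ < g. If i ∈ {0,1}^ℕ satisfies: for all n, Π_{λ₂}(σ^{n−1} i) < λ₂ whenever i_n = 0 and Π_{λ₂}(σ^{n−1} i) > λ₂²/(1−λ₂) whenever i_n = 1 (σ the left shift), then for all n: if i_n = 0 then Π_{λ₁}(σ^{n−1} i) ≤ λ₁ − δ, and if i_n = 1 then Π_{λ₁}(σ^{n−1} i) ≥ λ₁²/(1−λ₁) + δ, where δ = min{(λ₂−λ₁)(λ₁+λ₂−1), λ₁(1−λ₁−λ₁²)/(1−λ₁)} > 0. -/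

import Mathlib

/-!
Write `x = Π_{λ₁}(σ^{n-1} i)`, `y = Π_{λ₂}(σ^{n-1} i)` and `x', y'` for the same sums one place further
along. From `Π(σ^{n-1} i) = i_n λ + λ Π(σ^n i)`, each case is decided by the digit `i_{n+1}`:
when `i_{n+1} = i_n` the bound for `x` holds directly, with margin `λ₁(1 - λ₁ - λ₁²)/(1 - λ₁)`;
when `i_{n+1} ≠ i_n`, the hypothesis on `y` bounds `y'`, and `y' - x'` is at least `λ₂ - λ₁` (if
`i_{n+1} = 1`) or at most `λ₂²/(1 - λ₂) - λ₁²/(1 - λ₁)` (if `i_{n+1} = 0`), by comparing the digits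
with `1000…` resp. `0111…`, since `Π_{λ₂} - Π_{λ₁}` is monotone in the digits. This yields margin
`λ₁(λ₂ - λ₁) ≥ (λ₂ - λ₁)(λ₁ + λ₂ - 1)`.
-/

noncomputable section

def binSeq (i : ℕ → ℕ) : Prop := ∀ n, i n ≤ 1

/-- `Π_λ(i) = ∑_{n≥1} i_n λ^n` (sequences indexed from 0, so `i n` is the (n+1)-st digit). -/
def piL (l : ℝ) (i : ℕ → ℕ) : ℝ := ∑' n : ℕ, (i n : ℝ) * l ^ (n + 1)

/-- The left shift by `n` places: `σ^n i`. -/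
def shiftN (i : ℕ → ℕ) (n : ℕ) : ℕ → ℕ := fun m => i (m + n)

section piL

variable {l l₁ l₂ : ℝ} {i j k : ℕ → ℕ}

lemma binSeq.shiftN (hb : binSeq i) (n : ℕ) : binSeq (shiftN i n) := fun _ => hb _

lemma shiftN_shiftN (i : ℕ → ℕ) (m n : ℕ) : shiftN (shiftN i m) n = shiftN i (m + n) := by
  funext k
  simp only [shiftN, add_assoc, add_comm n m]

lemma summable_piL (h0 : 0 ≤ l) (h1 : l < 1) (hj : binSeq j) :
    Summable (fun n : ℕ => (j n : ℝ) * l ^ (n + 1)) := by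
  refine ((summable_nat_add_iff 1).mpr (summable_geometric_of_lt_one h0 h1)).of_nonneg_of_le
    (fun n => by positivity) (fun n => ?_)
  exact mul_le_of_le_one_left (by positivity) (by exact_mod_cast hj n)

lemma piL_nonneg (h0 : 0 ≤ l) (j : ℕ → ℕ) : 0 ≤ piL l j :=
  tsum_nonneg fun _ => by positivity

lemma piL_mono (h0 : 0 ≤ l) (h1 : l < 1) (hk : binSeq k) (hjk : ∀ n, j n ≤ k n) :
    piL l j ≤ piL l k :=
  (summable_piL h0 h1 fun n => (hjk n).trans (hk n)).tsum_le_tsum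
    (fun n => mul_le_mul_of_nonneg_right (by exact_mod_cast hjk n) (by positivity))
    (summable_piL h0 h1 hk)

lemma piL_one (h0 : 0 ≤ l) (h1 : l < 1) : piL l (fun _ => 1) = l / (1 - l) := by
  simp only [piL, Nat.cast_one, one_mul, pow_succ, tsum_mul_right, tsum_geometric_of_lt_one h0 h1]
  field_simp

lemma piL_le_div (h0 : 0 ≤ l) (h1 : l < 1) (hj : binSeq j) : piL l j ≤ l / (1 - l) :=
  piL_one h0 h1 ▸ piL_mono h0 h1 (fun _ => le_rfl) hj

lemma piL_eq_mul_add (h0 : 0 ≤ l) (h1 : l < 1) (hj : binSeq j) :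
    piL l j = j 0 * l + l * piL l (shiftN j 1) := by
  rw [piL, (summable_piL h0 h1 hj).tsum_eq_zero_add, piL, ← tsum_mul_left]
  congr 1
  · simp
  · exact tsum_congr fun m => by simp only [shiftN]; ring

lemma piL_shiftN_eq (h0 : 0 ≤ l) (h1 : l < 1) (hb : binSeq i) (n : ℕ) :
    piL l (shiftN i n) = i n * l + l * piL l (shiftN i (n + 1)) := by
  rw [piL_eq_mul_add h0 h1 (hb.shiftN n), shiftN_shiftN, shiftN, zero_add]

lemma piL_indicator_eq_zero (l : ℝ) : piL l (fun n => if n = 0 then 1 else 0) = l := by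
  simp [piL]

lemma piL_indicator_ne_zero (h0 : 0 ≤ l) (h1 : l < 1) :
    piL l (fun n => if n = 0 then 0 else 1) = l ^ 2 / (1 - l) := by
  have htail : shiftN (fun n => if n = 0 then 0 else 1) 1 = fun _ => 1 := by
    funext n
    simp [shiftN]
  rw [piL_eq_mul_add h0 h1 fun n => by split_ifs <;> simp, htail, piL_one h0 h1]
  simp only [if_pos, Nat.cast_zero, zero_mul, zero_add]
  ring

lemma piL_sub_piL_mono (h0 : 0 ≤ l₁) (h12 : l₁ ≤ l₂) (h1 : l₂ < 1) (hk : binSeq k)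
    (hjk : ∀ n, j n ≤ k n) : piL l₂ j - piL l₁ j ≤ piL l₂ k - piL l₁ k := by
  have hj : binSeq j := fun n => (hjk n).trans (hk n)
  have hl₂ : 0 ≤ l₂ := h0.trans h12
  have hl₁ : l₁ < 1 := h12.trans_lt h1
  simp only [piL]
  rw [← (summable_piL hl₂ h1 hj).tsum_sub (summable_piL h0 hl₁ hj),
    ← (summable_piL hl₂ h1 hk).tsum_sub (summable_piL h0 hl₁ hk)]
  refine ((summable_piL hl₂ h1 hj).sub (summable_piL h0 hl₁ hj)).tsum_le_tsum (fun n => ?_)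
    ((summable_piL hl₂ h1 hk).sub (summable_piL h0 hl₁ hk))
  rw [← mul_sub, ← mul_sub]
  exact mul_le_mul_of_nonneg_right (by exact_mod_cast hjk n)
    (sub_nonneg.2 (pow_le_pow_left₀ h0 h12 _))

lemma sub_le_piL_sub_piL_of_head_eq_one (h0 : 0 ≤ l₁) (h12 : l₁ ≤ l₂) (h1 : l₂ < 1)
    (hj : binSeq j) (hj0 : j 0 = 1) : l₂ - l₁ ≤ piL l₂ j - piL l₁ j := by
  simpa only [piL_indicator_eq_zero] using
    piL_sub_piL_mono (k := j) (j := fun n => if n = 0 then 1 else 0) h0 h12 h1 hj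
      fun n => by split_ifs with h <;> simp [h, hj0]

lemma piL_sub_piL_le_of_head_eq_zero (h0 : 0 ≤ l₁) (h12 : l₁ ≤ l₂) (h1 : l₂ < 1)
    (hj : binSeq j) (hj0 : j 0 = 0) :
    piL l₂ j - piL l₁ j ≤ l₂ ^ 2 / (1 - l₂) - l₁ ^ 2 / (1 - l₁) := by
  rw [← piL_indicator_ne_zero h0 (h12.trans_lt h1), ← piL_indicator_ne_zero (h0.trans h12) h1]
  refine piL_sub_piL_mono h0 h12 h1 (fun n => by split_ifs <;> simp) fun n => ?_
  split_ifs with h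
  · simp [h, hj0]
  · exact hj n

end piL

section digits

variable {l₁ l₂ : ℝ} {i : ℕ → ℕ} {n : ℕ}

theorem piL_shiftN_le_of_eq_zero (h0 : 0 < l₁) (h12 : l₁ ≤ l₂) (h1 : l₂ < 1) (hb : binSeq i)
    (hn : i n = 0) (hlt : piL l₂ (shiftN i n) < l₂) :
    piL l₁ (shiftN i n) ≤ l₁ - min (l₁ * (l₂ - l₁)) (l₁ * (1 - l₁ - l₁ ^ 2) / (1 - l₁)) := by
  have hl₁ : l₁ < 1 := h12.trans_lt h1
  have hl₂ : 0 < l₂ := h0.trans_le h12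
  rw [piL_shiftN_eq h0.le hl₁ hb, hn, Nat.cast_zero, zero_mul, zero_add]
  rw [piL_shiftN_eq hl₂.le h1 hb, hn, Nat.cast_zero, zero_mul, zero_add] at hlt
  have hy : piL l₂ (shiftN i (n + 1)) < 1 := (mul_lt_iff_lt_one_right hl₂).mp hlt
  rcases Nat.le_one_iff_eq_zero_or_eq_one.mp (hb (n + 1)) with h | h
  · have hx : piL l₁ (shiftN i (n + 1)) ≤ l₁ * (l₁ / (1 - l₁)) := by
      rw [piL_shiftN_eq h0.le hl₁ hb, h, Nat.cast_zero, zero_mul, zero_add]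
      exact mul_le_mul_of_nonneg_left (piL_le_div h0.le hl₁ (hb.shiftN _)) h0.le
    calc l₁ * piL l₁ (shiftN i (n + 1)) ≤ l₁ * (l₁ * (l₁ / (1 - l₁))) := by gcongr
      _ = l₁ - l₁ * (1 - l₁ - l₁ ^ 2) / (1 - l₁) := by
        field_simp [(sub_pos.2 hl₁).ne']; ring
      _ ≤ _ := sub_le_sub_left (min_le_right _ _) _
  · have hd := sub_le_piL_sub_piL_of_head_eq_one h0.le h12 h1 (hb.shiftN (n + 1))
      (by simpa [shiftN] using h)
    calc l₁ * piL l₁ (shiftN i (n + 1)) ≤ l₁ * (1 - (l₂ - l₁)) := by gcongr; linarith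
      _ = l₁ - l₁ * (l₂ - l₁) := by ring
      _ ≤ _ := sub_le_sub_left (min_le_left _ _) _

theorem le_piL_shiftN_of_eq_one (h0 : 0 < l₁) (h12 : l₁ ≤ l₂) (h1 : l₂ < 1) (hb : binSeq i)
    (hn : i n = 1) (hgt : l₂ ^ 2 / (1 - l₂) < piL l₂ (shiftN i n)) :
    l₁ ^ 2 / (1 - l₁) + min (l₁ * (l₂ - l₁)) (l₁ * (1 - l₁ - l₁ ^ 2) / (1 - l₁)) ≤
      piL l₁ (shiftN i n) := by
  have hl₁ : l₁ < 1 := h12.trans_lt h1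
  have hl₂ : 0 < l₂ := h0.trans_le h12
  rw [piL_shiftN_eq h0.le hl₁ hb, hn, Nat.cast_one, one_mul]
  rw [piL_shiftN_eq hl₂.le h1 hb, hn, Nat.cast_one, one_mul] at hgt
  rcases Nat.le_one_iff_eq_zero_or_eq_one.mp (hb (n + 1)) with h | h
  · have hd := piL_sub_piL_le_of_head_eq_zero h0.le h12 h1 (hb.shiftN (n + 1))
      (by simpa [shiftN] using h)
    have hy : l₂ - 1 + l₂ ^ 2 / (1 - l₂) < piL l₂ (shiftN i (n + 1)) := by
      refine lt_of_mul_lt_mul_left ?_ hl₂.le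
      have : l₂ * (l₂ - 1 + l₂ ^ 2 / (1 - l₂)) = l₂ ^ 2 / (1 - l₂) - l₂ := by
        field_simp [(sub_pos.2 h1).ne']; ring
      linarith
    calc l₁ ^ 2 / (1 - l₁) + min (l₁ * (l₂ - l₁)) (l₁ * (1 - l₁ - l₁ ^ 2) / (1 - l₁))
        ≤ l₁ ^ 2 / (1 - l₁) + l₁ * (l₂ - l₁) := by gcongr; exact min_le_left _ _
      _ = l₁ + l₁ * (l₂ - 1 + l₁ ^ 2 / (1 - l₁)) := by field_simp [(sub_pos.2 hl₁).ne']; ring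
      _ ≤ l₁ + l₁ * piL l₁ (shiftN i (n + 1)) := by gcongr; linarith
  · have hx : l₁ ≤ piL l₁ (shiftN i (n + 1)) := by
      rw [piL_shiftN_eq h0.le hl₁ hb, h, Nat.cast_one, one_mul]
      exact le_add_of_nonneg_right (mul_nonneg h0.le (piL_nonneg h0.le _))
    calc l₁ ^ 2 / (1 - l₁) + min (l₁ * (l₂ - l₁)) (l₁ * (1 - l₁ - l₁ ^ 2) / (1 - l₁))
        ≤ l₁ ^ 2 / (1 - l₁) + l₁ * (1 - l₁ - l₁ ^ 2) / (1 - l₁) := by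
          gcongr; exact min_le_right _ _
      _ = l₁ + l₁ * l₁ := by field_simp [(sub_pos.2 hl₁).ne']; ring
      _ ≤ l₁ + l₁ * piL l₁ (shiftN i (n + 1)) := by gcongr

end digits

lemma add_sq_lt_one_of_lt {l : ℝ} (h0 : 0 ≤ l) (h : l < (Real.sqrt 5 - 1) / 2) : l + l ^ 2 < 1 := by
  nlinarith [Real.sq_sqrt (show (0 : ℝ) ≤ 5 by norm_num), Real.sqrt_nonneg 5]

theorem stmt1 (l₁ l₂ : ℝ) (h₁ : 1 / 2 < l₁) (h₂ : l₁ < l₂)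
    (h₃ : l₂ < (Real.sqrt 5 - 1) / 2) (i : ℕ → ℕ) (hb : binSeq i)
    (hyp : ∀ n : ℕ, (i n = 0 → piL l₂ (shiftN i n) < l₂) ∧
      (i n = 1 → piL l₂ (shiftN i n) > l₂ ^ 2 / (1 - l₂))) :
    0 < min ((l₂ - l₁) * (l₁ + l₂ - 1)) (l₁ * (1 - l₁ - l₁ ^ 2) / (1 - l₁)) ∧
    ∀ n : ℕ,
      (i n = 0 → piL l₁ (shiftN i n) ≤
        l₁ - min ((l₂ - l₁) * (l₁ + l₂ - 1)) (l₁ * (1 - l₁ - l₁ ^ 2) / (1 - l₁))) ∧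
      (i n = 1 → piL l₁ (shiftN i n) ≥
        l₁ ^ 2 / (1 - l₁) +
          min ((l₂ - l₁) * (l₁ + l₂ - 1)) (l₁ * (1 - l₁ - l₁ ^ 2) / (1 - l₁))) := by
  have h0 : 0 < l₁ := by linarith
  have hsq₁ : l₁ + l₁ ^ 2 < 1 := add_sq_lt_one_of_lt h0.le (h₂.trans h₃)
  have hsq₂ : l₂ + l₂ ^ 2 < 1 := add_sq_lt_one_of_lt (by linarith) h₃
  have h1 : l₂ < 1 := by nlinarith
  have hδ : min ((l₂ - l₁) * (l₁ + l₂ - 1)) (l₁ * (1 - l₁ - l₁ ^ 2) / (1 - l₁)) ≤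
      min (l₁ * (l₂ - l₁)) (l₁ * (1 - l₁ - l₁ ^ 2) / (1 - l₁)) :=
    min_le_min_right _ (by nlinarith)
  refine ⟨lt_min (by nlinarith) (div_pos (by nlinarith) (by linarith)), fun n => ⟨fun hn => ?_,
    fun hn => ?_⟩⟩
  · linarith [piL_shiftN_le_of_eq_zero h0 h₂.le h1 hb hn ((hyp n).1 hn)]
  · linarith [le_piL_shiftN_of_eq_one h0 h₂.le h1 hb hn ((hyp n).2 hn)]
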